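/- arXiv:1908.10111 — 6 statements merged into one kernel-verified Lean document; each statement's English description precedes it below -/
import Mathlib

section
/- Let H be a Hilbert space and F : H → ℝ a convex, Gateaux-differentiable functional. For u ∈ H, define the unilateral slope |∂F|₊(u) = limsup over v → u with v ≥ u (in a partial order given by a closed convex cone) of [F(v) − F(u)]₋ / ‖v − u‖. Then |∂F|₊(u) = sup { −dF(u)[z] : z ≥ 0, ‖z‖ ≤ 1 }. -/
/-!
By the gradient inequality `dF(u)[v - u] ≤ F v - F u`, every difference quotient
`[F v - F u]₋ / ‖v - u‖` is at most `[-dF(u)[z]]₊` for the unit vector `z = (v - u) / ‖v - u‖ ∈ C`.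
Conversely, along the ray `u + s z` (`z ∈ C`, `s → 0⁺`) the quotient tends to
`[-dF(u)[z]]₊ / ‖z‖`, which dominates `[-dF(u)[z]]₊` when `‖z‖ ≤ 1`.
-/

open Filter Set Topology

noncomputable def unilateralSlope {E : Type*} [NormedAddCommGroup E] (C : Set E) (F : E → ℝ)
    (u : E) : ENNReal :=
  limsup (fun v => ENNReal.ofReal (max (-(F v - F u)) 0 / ‖v - u‖))
    (𝓝[{v | v - u ∈ C ∧ v ≠ u}] u)

theorem ENNReal.ofReal_max_zero_div (x : ℝ) {r : ℝ} (hr : 0 ≤ r) :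
    ENNReal.ofReal (max x 0 / r) = ENNReal.ofReal (x / r) := by
  rw [← max_div_div_right hr, zero_div, ENNReal.ofReal_max, ENNReal.ofReal_zero, max_zero]

theorem Filter.Tendsto.le_limsup_of_tendsto_comp {α β γ : Type*} [CompleteLinearOrder β]
    [TopologicalSpace β] [OrderTopology β] {f : α → β} {m : γ → α} {l : Filter γ} [l.NeBot]
    {l' : Filter α} {b : β} (hm : Tendsto m l l') (hfm : Tendsto (f ∘ m) l (𝓝 b)) :
    b ≤ limsup f l' :=
  hfm.limsup_eq ▸ hm.limsup_comp_le_limsup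

theorem ConvexOn.le_sub_of_hasLineDerivAt {E : Type*} [AddCommGroup E] [Module ℝ E] {F : E → ℝ}
    (hF : ConvexOn ℝ univ F) {u z : E} {d : ℝ} (hd : HasLineDerivAt ℝ F d u z) :
    d ≤ F (u + z) - F u := by
  have hline : ConvexOn ℝ univ (fun s : ℝ => F (u + s • z)) := by
    simpa [Function.comp_def, AffineMap.lineMap_apply, add_comm] using
      hF.comp_affineMap (AffineMap.lineMap u (u + z))
  simpa [slope] using hline.le_slope_of_hasDerivAt (mem_univ 0) (mem_univ 1) one_pos hd

theorem tendsto_add_smul_nhdsWithin_cone {E : Type*} [AddCommGroup E] [Module ℝ E]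
    [TopologicalSpace E] [ContinuousAdd E] [ContinuousSMul ℝ E] {C : Set E}
    (hC : ∀ c : ℝ, 0 ≤ c → ∀ x ∈ C, c • x ∈ C) {z : E} (hz : z ∈ C) (hz0 : z ≠ 0) (u : E) :
    Tendsto (fun s : ℝ => u + s • z) (𝓝[>] 0) (𝓝[{v | v - u ∈ C ∧ v ≠ u}] u) := by
  refine tendsto_nhdsWithin_iff.2 ⟨?_, ?_⟩
  · have : Continuous fun s : ℝ => u + s • z := by fun_prop
    simpa using this.continuousWithinAt.tendsto (x := 0) (s := Ioi 0)
  · filter_upwards [self_mem_nhdsWithin] with s (hs : 0 < s)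
    simpa [hs.ne'] using And.intro (hC s hs.le z hz) hz0

theorem tendsto_neg_sub_div_norm_of_hasLineDerivAt {E : Type*} [NormedAddCommGroup E]
    [NormedSpace ℝ E] {F : E → ℝ} {u z : E} {d : ℝ} (hd : HasLineDerivAt ℝ F d u z) :
    Tendsto (fun s : ℝ => -(F (u + s • z) - F u) / ‖u + s • z - u‖) (𝓝[>] 0)
      (𝓝 (-d / ‖z‖)) := by
  refine (hd.tendsto_slope_zero_right.neg.div_const ‖z‖).congr' ?_
  filter_upwards [self_mem_nhdsWithin] with s (hs : 0 < s)
  rw [add_sub_cancel_left, norm_smul, Real.norm_of_nonneg hs.le, smul_eq_mul]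
  field_simp

section

variable {E : Type*} [NormedAddCommGroup E] [NormedSpace ℝ E] {C : Set E} {F : E → ℝ}
  {dF : E → E →L[ℝ] ℝ}

theorem unilateralSlope_le_iSup (hC : ∀ c : ℝ, 0 ≤ c → ∀ x ∈ C, c • x ∈ C)
    (hF : ConvexOn ℝ univ F) (hdF : ∀ u z : E, HasLineDerivAt ℝ F (dF u z) u z) (u : E) :
    unilateralSlope C F u ≤ ⨆ z ∈ {z : E | z ∈ C ∧ ‖z‖ ≤ 1}, ENNReal.ofReal (-(dF u z)) := by
  refine limsup_le_of_le (by isBoundedDefault) ?_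
  filter_upwards [self_mem_nhdsWithin] with v ⟨hvC, hvu⟩
  have hpos : 0 < ‖v - u‖ := norm_pos_iff.2 (sub_ne_zero.2 hvu)
  have hgrad : dF u (v - u) ≤ F v - F u := by
    simpa using hF.le_sub_of_hasLineDerivAt (hdF u (v - u))
  set z := ‖v - u‖⁻¹ • (v - u)
  have hz : z ∈ C ∧ ‖z‖ ≤ 1 := by
    refine ⟨hC _ (inv_nonneg.2 hpos.le) _ hvC, ?_⟩
    rw [norm_smul, norm_inv, norm_norm, inv_mul_cancel₀ hpos.ne']
  calc ENNReal.ofReal (max (-(F v - F u)) 0 / ‖v - u‖)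
      = ENNReal.ofReal (-(F v - F u) / ‖v - u‖) := ENNReal.ofReal_max_zero_div _ hpos.le
    _ ≤ ENNReal.ofReal (-(dF u z)) := by
      gcongr
      rw [map_smul, smul_eq_mul, inv_mul_eq_div, neg_div]
      gcongr
    _ ≤ _ := le_iSup₂ (f := fun z _ => ENNReal.ofReal (-(dF u z))) z hz

theorem iSup_le_unilateralSlope (hC : ∀ c : ℝ, 0 ≤ c → ∀ x ∈ C, c • x ∈ C)
    (hdF : ∀ u z : E, HasLineDerivAt ℝ F (dF u z) u z) (u : E) :
    ⨆ z ∈ {z : E | z ∈ C ∧ ‖z‖ ≤ 1}, ENNReal.ofReal (-(dF u z)) ≤ unilateralSlope C F u := by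
  refine iSup₂_le fun z ⟨hzC, hz1⟩ => ?_
  rcases eq_or_ne z 0 with rfl | hz0
  · simp
  have hlim : ENNReal.ofReal (-(dF u z) / ‖z‖) ≤ unilateralSlope C F u := by
    refine (tendsto_add_smul_nhdsWithin_cone hC hzC hz0 u).le_limsup_of_tendsto_comp ?_
    refine (ENNReal.tendsto_ofReal (tendsto_neg_sub_div_norm_of_hasLineDerivAt (hdF u z))).congr
      fun s => ?_
    exact (ENNReal.ofReal_max_zero_div _ (norm_nonneg _)).symm
  refine le_trans ?_ hlim
  rcases le_total (-(dF u z)) 0 with hneg | hnonneg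
  · simp [ENNReal.ofReal_of_nonpos hneg]
  · exact ENNReal.ofReal_le_ofReal (le_div_self hnonneg (norm_pos_iff.2 hz0) hz1)

end

theorem unilateral_slope_eq_sup_of_convex_general
    {H : Type*} [NormedAddCommGroup H] [InnerProductSpace ℝ H]
    (C : Set H)
    (hC_cone : ∀ c : ℝ, 0 ≤ c → ∀ x ∈ C, c • x ∈ C)
    (F : H → ℝ) (hF : ConvexOn ℝ Set.univ F)
    (dF : H → H →L[ℝ] ℝ)
    (hdF : ∀ u z : H, HasDerivAt (fun s : ℝ => F (u + s • z)) (dF u z) 0)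
    (u : H) :
    Filter.limsup (fun v => ENNReal.ofReal (max (-(F v - F u)) 0 / ‖v - u‖))
        (nhdsWithin u {v : H | v - u ∈ C ∧ v ≠ u}) =
      ⨆ z ∈ {z : H | z ∈ C ∧ ‖z‖ ≤ 1}, ENNReal.ofReal (-(dF u z)) :=
  le_antisymm (unilateralSlope_le_iSup hC_cone hF hdF u) (iSup_le_unilateralSlope hC_cone hdF u)

/-- For a convex Gateaux-differentiable functional `F` on a Hilbert space `H`, with a partial
order given by a closed convex cone `C`, the unilateral slope (the limsup of
`[F v - F u]₋ / ‖v - u‖` as `v → u` with `v - u ∈ C`, `v ≠ u`) equals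
`sup { -dF(u)[z] : z ∈ C, ‖z‖ ≤ 1 }`. -/
theorem unilateral_slope_eq_sup_of_convex
    {H : Type*} [NormedAddCommGroup H] [InnerProductSpace ℝ H] [CompleteSpace H]
    (C : Set H) (hC_closed : IsClosed C) (hC_convex : Convex ℝ C)
    (hC_cone : ∀ c : ℝ, 0 ≤ c → ∀ x ∈ C, c • x ∈ C)
    (F : H → ℝ) (hF : ConvexOn ℝ Set.univ F)
    (dF : H → H →L[ℝ] ℝ)
    (hdF : ∀ u z : H, HasDerivAt (fun s : ℝ => F (u + s • z)) (dF u z) 0)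
    (u : H) :
    Filter.limsup (fun v => ENNReal.ofReal (max (-(F v - F u)) 0 / ‖v - u‖))
        (nhdsWithin u {v : H | v - u ∈ C ∧ v ≠ u}) =
      ⨆ z ∈ {z : H | z ∈ C ∧ ‖z‖ ≤ 1}, ENNReal.ofReal (-(dF u z)) :=
  unilateral_slope_eq_sup_of_convex_general C hC_cone F hF dF hdF u
end

section
/- With F_n(t,u) = ½ a(u,u) − ⟨f_n(t), u⟩ and F(t,u) = ½ a(u,u) − ⟨f(t), u⟩, if f_n(t) ⇀ f(t) weakly in L²(Ω) and u_n ⇀ u weakly in H¹₀(Ω), then |∂F|_{L²₊}(t,u) ≤ liminf_n |∂F_n|_{L²₊}(t,u_n), where |∂F|_{L²₊}(t,u) = sup { −a(u,z) + ⟨f(t),z⟩ : z ∈ H¹₀, z ≥ 0, ‖z‖_{L²} ≤ 1 }, and |∂F_n|_{L²₊} is defined in the same way with f_n(t) in place of f(t). -/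
open MeasureTheory Filter

/-- Weak lower semicontinuity of the unilateral slope: if `fₙ ⇀ f` weakly in `L²` and
`uₙ ⇀ u` weakly in `H¹₀` (modelled by a normed space `V` embedded in `L²` by `ι`), then
`|∂F|_{L²₊}(u) ≤ liminf |∂Fₙ|_{L²₊}(uₙ)`, where the slope of `F(t,u) = ½a(u,u) − ⟨f,u⟩` is
`sup { ⟨f, ι z⟩ − a(u,z) : z ∈ V, ι z ≥ 0, ‖ι z‖_{L²} ≤ 1 }` (computed in `[0,∞]`). -/
theorem unilateral_slope_weak_lsc
    {α : Type*} [MeasurableSpace α] (μ : Measure α)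
    {V : Type*} [NormedAddCommGroup V] [NormedSpace ℝ V]
    (ι : V →L[ℝ] Lp ℝ 2 μ)
    (a : V →L[ℝ] V →L[ℝ] ℝ) (hsymm : ∀ u v : V, a u v = a v u)
    (f : ℕ → Lp ℝ 2 μ) (flim : Lp ℝ 2 μ)
    (u : ℕ → V) (ulim : V)
    (hf : ∀ g : Lp ℝ 2 μ,
      Tendsto (fun n => (inner ℝ (f n) g : ℝ)) atTop (nhds (inner ℝ flim g : ℝ)))
    (hu : ∀ ℓ : V →L[ℝ] ℝ, Tendsto (fun n => ℓ (u n)) atTop (nhds (ℓ ulim))) :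
    (⨆ z ∈ {z : V | 0 ≤ ι z ∧ ‖ι z‖ ≤ 1},
        ENNReal.ofReal ((inner ℝ flim (ι z) : ℝ) - a ulim z)) ≤
      Filter.liminf (fun n =>
        ⨆ z ∈ {z : V | 0 ≤ ι z ∧ ‖ι z‖ ≤ 1},
          ENNReal.ofReal ((inner ℝ (f n) (ι z) : ℝ) - a (u n) z)) atTop := by
  refine iSup₂_le fun z hz => ?_
  have h1 : Tendsto (fun n => ENNReal.ofReal ((inner ℝ (f n) (ι z) : ℝ) - a (u n) z)) atTop
      (nhds (ENNReal.ofReal ((inner ℝ flim (ι z) : ℝ) - a ulim z))) := by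
    refine (ENNReal.continuous_ofReal.tendsto _).comp ?_
    exact (hf (ι z)).sub (hu (a.flip z))
  calc ENNReal.ofReal ((inner ℝ flim (ι z) : ℝ) - a ulim z)
      = Filter.liminf (fun n => ENNReal.ofReal ((inner ℝ (f n) (ι z) : ℝ) - a (u n) z)) atTop :=
        (h1.liminf_eq).symm
    _ ≤ _ := by
        refine liminf_le_liminf (Eventually.of_forall fun n => ?_)
        exact le_iSup₂ (f := fun z _ => ENNReal.ofReal ((inner ℝ (f n) (ι z) : ℝ) - a (u n) z)) z hz
end

section
/- Let F(u) = ½∫_{(-1,1)} |u'|² dx − ∫_{(-1,1)} f u dx on H¹₀(−1,1), with f(x) = u₀(x) = 1 − |x|. Define u(t) = (1+t) u₀. Then for every t ≥ 0, the distribution u''(t) + f equals −2(1+t)δ₀ + u₀, its positive part is [u''(t)+f]₊ = u₀ ∈ L², and u satisfies u̇(t) = [u''(t) + f]₊ with u(0) = u₀, yet the energy identity E(u(t)) = E(u₀) − ∫₀ᵗ ‖u̇(s)‖²_{L²} ds + ∫₀ᵗ ⟨f, u̇(s)⟩ ds fails: indeed E(u(t)) = (1+t)² while the right-hand side equals 1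 for all t ≥ 0. -/
/-!
The hat function `u₀ = 1 − |x|` has a kink at `0`, so `u''(t) = −2(1+t)δ₀` is a negative
singular measure. Taking the positive part discards it, leaving `[u''(t) + f]₊ = f = u₀`, so the
flow `u(t) = (1+t)u₀` solves `u̇ = [u'' + f]₊`. In the energy balance, `‖u̇‖² = ⟨f, u̇⟩` makes
the dissipation and forcing terms cancel, whereas `E(u(t)) = (1+t)²` grows: by the chain rule
`dE/dt = ⟨−u'', u̇⟩ = 2(1+t) u₀(0)`, which is exactly the contribution of the discarded Dirac mass.
-/

open MeasureTheory

/-- The hat function `u₀(x) = 1 − |x|` on `(−1,1)`. -/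
noncomputable def hatFun (x : ℝ) : ℝ := 1 - |x|

/-- The curve `u(t) = (1+t) u₀`. -/
noncomputable def hatFlow (t x : ℝ) : ℝ := (1 + t) * hatFun x

theorem intervalIntegral.integral_affine_mul_deriv_deriv {ψ : ℝ → ℝ} (hψ : ContDiff ℝ 2 ψ)
    (a b c m : ℝ) :
    ∫ x in a..b, (c + m * x) * deriv (deriv ψ) x =
      (c + m * b) * deriv ψ b - (c + m * a) * deriv ψ a - m * (ψ b - ψ a) := by
  have hψ' : Differentiable ℝ (deriv ψ) := hψ.differentiable_deriv_two
  have hψ'' : Continuous (deriv (deriv ψ)) := (hψ.deriv' (n := 1)).continuous_deriv_one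
  have haffine (x : ℝ) : HasDerivAt (fun x => c + m * x) m x := by
    simpa using ((hasDerivAt_id x).const_mul m).const_add c
  rw [integral_mul_deriv_eq_deriv_mul (fun x _ => haffine x) (fun x _ => (hψ' x).hasDerivAt)
    intervalIntegrable_const (hψ''.intervalIntegrable a b),
    integral_const_mul, integral_deriv_eq_sub (fun x _ => hψ.differentiable two_ne_zero x)
    (hψ'.continuous.intervalIntegrable a b)]

theorem integral_hatFun_mul_deriv_deriv {ψ : ℝ → ℝ} (hψ : ContDiff ℝ 2 ψ) :
    ∫ x in (-1:ℝ)..1, hatFun x * deriv (deriv ψ) x = ψ 1 + ψ (-1) - 2 * ψ 0 := by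
  have hcont : Continuous fun x => hatFun x * deriv (deriv ψ) x :=
    (continuous_const.sub continuous_abs).mul (hψ.deriv' (n := 1)).continuous_deriv_one
  have hleft : ∫ x in (-1:ℝ)..0, hatFun x * deriv (deriv ψ) x =
      ∫ x in (-1:ℝ)..0, (1 + 1 * x) * deriv (deriv ψ) x := by
    refine intervalIntegral.integral_congr fun x hx => ?_
    rw [Set.uIcc_of_le (by norm_num)] at hx
    simp [hatFun, abs_of_nonpos hx.2]
  have hright : ∫ x in (0:ℝ)..1, hatFun x * deriv (deriv ψ) x =
      ∫ x in (0:ℝ)..1, (1 + -1 * x) * deriv (deriv ψ) x := by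
    refine intervalIntegral.integral_congr fun x hx => ?_
    rw [Set.uIcc_of_le zero_le_one] at hx
    simp [hatFun, abs_of_nonneg hx.1, sub_eq_add_neg]
  rw [← intervalIntegral.integral_add_adjacent_intervals (hcont.intervalIntegrable _ 0)
    (hcont.intervalIntegrable 0 _), hleft, hright,
    intervalIntegral.integral_affine_mul_deriv_deriv hψ,
    intervalIntegral.integral_affine_mul_deriv_deriv hψ]
  ring

theorem deriv_hatFun (x : ℝ) : deriv hatFun x = -SignType.sign x := by
  unfold hatFun
  simp [deriv_abs]

theorem deriv_hatFlow (t x : ℝ) : deriv (hatFlow t) x = -(1 + t) * SignType.sign x := by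
  rw [neg_mul_comm, ← deriv_hatFun, ← deriv_const_mul_field]
  rfl

theorem sq_deriv_hatFlow_of_ne_zero (t : ℝ) {x : ℝ} (hx : x ≠ 0) :
    deriv (hatFlow t) x ^ 2 = (1 + t) ^ 2 := by
  rw [deriv_hatFlow, mul_pow, neg_sq]
  rcases hx.lt_or_gt with hneg | hpos
  · simp [hneg]
  · simp [hpos]

theorem energy_hatFlow (t : ℝ) :
    (1 / 2) * ∫ x in (-1:ℝ)..1, (deriv (hatFlow t) x) ^ 2 = (1 + t) ^ 2 := by
  have hae : ∀ᵐ x : ℝ, x ≠ 0 := by simp [ae_iff, measure_singleton]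
  have hconst : ∫ x in (-1:ℝ)..1, (deriv (hatFlow t) x) ^ 2 = ∫ _ in (-1:ℝ)..1, (1 + t) ^ 2 :=
    intervalIntegral.integral_congr_ae <| by
      filter_upwards [hae] with x hx _ using sq_deriv_hatFlow_of_ne_zero t hx
  rw [hconst, intervalIntegral.integral_const, smul_eq_mul]
  ring

theorem hatFlow_zero : hatFlow 0 = hatFun := by
  funext x; simp [hatFlow]

theorem hasDerivAt_hatFlow (t x : ℝ) : HasDerivAt (fun s => hatFlow s x) (hatFun x) t := by
  simpa [hatFlow] using ((hasDerivAt_id t).const_add 1).mul_const (hatFun x)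

theorem integral_hatFlow_mul_deriv_deriv (t : ℝ) {φ : ℝ → ℝ} (hφ : ContDiff ℝ 2 φ)
    (hsupp : tsupport φ ⊆ Set.Ioo (-1) 1) :
    ∫ x in (-1:ℝ)..1, hatFlow t x * deriv (deriv φ) x = -2 * (1 + t) * φ 0 := by
  have hφ_one : φ 1 = 0 := image_eq_zero_of_notMem_tsupport fun h => lt_irrefl _ (hsupp h).2
  have hφ_neg_one : φ (-1) = 0 :=
    image_eq_zero_of_notMem_tsupport fun h => lt_irrefl _ (hsupp h).1
  simp only [hatFlow, mul_assoc]
  rw [intervalIntegral.integral_const_mul, integral_hatFun_mul_deriv_deriv hφ, hφ_one, hφ_neg_one]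
  ring

/-- Counter-example to uniqueness for the parabolic problem `u̇ = [u'' + f]₊`: with
`f = u₀ = 1 − |·|` and `u(t) = (1+t)u₀` one has, for every `t ≥ 0`:
(1) the distributional identity `u''(t) + f = −2(1+t)δ₀ + u₀` (tested against smooth `φ`
compactly supported in `(−1,1)`);
(2) the Hahn decomposition of this measure is into the mutually singular parts
`2(1+t)δ₀` and `u₀·(vol|_{(−1,1)})`, so `[u''(t)+f]₊ = u₀ ∈ L²`;
(3) `u̇(t) = u₀ = [u''(t)+f]₊` and `u(0) = u₀`;
(4)–(5) `E(u(t)) = (1+t)²` and `E(u₀) = 1`;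
(6) the right-hand side `E(u₀) − ∫₀ᵗ ‖u̇‖² + ∫₀ᵗ ⟨f,u̇⟩` equals `1`, while `(1+t)² ≠ 1` for
`t > 0`, so the energy identity fails. -/
theorem hatFlow_solves_pde_but_violates_energy_identity :
    (∀ t : ℝ, 0 ≤ t → ∀ φ : ℝ → ℝ, ContDiff ℝ 2 φ → HasCompactSupport φ →
      tsupport φ ⊆ Set.Ioo (-1 : ℝ) 1 →
      (∫ x in (-1:ℝ)..1, hatFlow t x * deriv (deriv φ) x) +
          (∫ x in (-1:ℝ)..1, hatFun x * φ x) =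
        -2 * (1 + t) * φ 0 + ∫ x in (-1:ℝ)..1, hatFun x * φ x) ∧
    (∀ t : ℝ, 0 ≤ t →
      ((ENNReal.ofReal (2 * (1 + t))) • Measure.dirac (0 : ℝ)).MutuallySingular
        ((volume.restrict (Set.Ioo (-1:ℝ) 1)).withDensity
          fun x => ENNReal.ofReal (hatFun x))) ∧
    (∀ t x : ℝ, HasDerivAt (fun s => hatFlow s x) (hatFun x) t) ∧
    (hatFlow 0 = hatFun) ∧
    (∀ t : ℝ, 0 ≤ t →
      (1 / 2) * ∫ x in (-1:ℝ)..1, (deriv (fun y => hatFlow t y) x) ^ 2 = (1 + t) ^ 2) ∧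
    ((1 / 2) * ∫ x in (-1:ℝ)..1, (deriv hatFun x) ^ 2 = 1) ∧
    (∀ t : ℝ, 0 ≤ t →
      (1 : ℝ) - (∫ s in (0:ℝ)..t, ∫ x in (-1:ℝ)..1, (hatFun x) ^ 2) +
          (∫ s in (0:ℝ)..t, ∫ x in (-1:ℝ)..1, hatFun x * hatFun x) = 1) ∧
    (∀ t : ℝ, 0 < t → ((1 + t) ^ 2 : ℝ) ≠ 1) := by
  refine ⟨fun t _ φ hφ _ hsupp => ?_, fun t _ => (mutuallySingular_dirac 0 _).smul _,
    hasDerivAt_hatFlow, hatFlow_zero, fun t _ => energy_hatFlow t, ?_, fun t _ => ?_,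
    fun t ht => ?_⟩
  · rw [integral_hatFlow_mul_deriv_deriv t hφ hsupp]
  · simpa [hatFlow_zero] using energy_hatFlow 0
  · simp only [← sq, sub_add_cancel]
  · nlinarith
end

section
/- Let F(t,u) = ½ a(u,u) − ⟨f(t),u⟩ with a coercive continuous symmetric bilinear form, and let u ∈ W^{1,2}_{loc}(0,T; H¹₀) with u̇(t) ≥ 0 a.e. Then for a.e. t the following are equivalent: (i) A u(t) + f(t) ∈ ∂Φ(u̇(t)), where Φ(v) = ½‖v‖²_{L²} + I_{{v≥0}} and ∂Φ ⊂ H⁻¹ is the subdifferential; (ii) ½|u̇(t)|²_{L²₊} + ½|∂F|²_{L²₊}(t, u(t)) = −dF(t,u(t))[u̇(t)]. -/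
/-!
Abstractly, `K` is a convex cone, `p` a seminorm and `L` a linear functional (here `L = Au + f`).
Write `s` for the slope, the supremum of `L` over `K ∩ {p ≤ 1}`; a bounded slope means
`L ≤ s p` on `K`. If `½ p(v)² + ½ s² = L v`, then `L w - ½ p(w)² ≤ s p(w) - ½ p(w)² ≤ ½ s²`
for `w ∈ K`, with equality at `v`, which is the subgradient inequality. Conversely, testing the
subgradient inequality along the ray through `v` gives the first-order condition `L v = p(v)²`,
and testing it at `t • z` for `t > 0` gives `L ≤ p(v) p` on `K`. Hence `s = p(v)`, and both
sides of the power identity equal `p(v)²`.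
-/

open MeasureTheory

instance MeasureTheory.Lp.instPosSMulMono {α : Type*} [MeasurableSpace α] {μ : Measure α}
    {p : ENNReal} [Fact (1 ≤ p)] : PosSMulMono ℝ (Lp ℝ p μ) :=
  PosSMulMono.of_smul_nonneg fun c hc g hg => by
    rw [← Lp.coeFn_nonneg] at hg ⊢
    filter_upwards [hg, Lp.coeFn_smul c g] with x hgx hcg
    rw [hcg, Pi.smul_apply, smul_eq_mul]
    exact mul_nonneg hc hgx

lemma le_of_forall_pos_mul_le_half_sq_add_half_sq {x c : ℝ} (hc : 0 ≤ c)
    (h : ∀ t, 0 < t → t * x ≤ 1 / 2 * c ^ 2 + 1 / 2 * t ^ 2) : x ≤ c := by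
  by_contra! hcx
  nlinarith [h x (hc.trans_lt hcx)]

/-- First-order condition at the interior maximum `t = 1` of `t ↦ (t - 1) x - (t² - 1) y / 2`. -/
lemma eq_of_forall_nonneg_sub_one_mul_le {x y : ℝ}
    (h : ∀ t, 0 ≤ t → (t - 1) * x ≤ (t ^ 2 - 1) / 2 * y) : x = y := by
  set φ : ℝ → ℝ := fun t => (t - 1) * x - (t ^ 2 - 1) / 2 * y
  have hmax : IsLocalMax φ 1 := by
    filter_upwards [Ioi_mem_nhds one_pos] with t ht
    simpa [φ, sub_nonpos] using h t ht.le
  have hderiv : HasDerivAt φ (1 * x - 2 * 1 ^ (2 - 1) / 2 * y) 1 :=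
    (((hasDerivAt_id' 1).sub_const 1).mul_const x).sub
      ((((hasDerivAt_pow 2 1).sub_const 1).div_const 2).mul_const y)
  have hzero := hmax.hasDerivAt_eq_zero hderiv
  norm_num at hzero
  linarith

section

variable {V : Type*} [AddCommGroup V] [Module ℝ V]

/-- Its supremum is the unilateral slope `|∂F|_{L²₊}` when `L = -dF(u)` and `p` is the `L²` norm. -/
def slopeSet (K : PointedCone ℝ V) (p : Seminorm ℝ V) (L : V →ₗ[ℝ] ℝ) : Set ℝ :=
  {r | ∃ z, z ∈ K ∧ p z ≤ 1 ∧ r = L z}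

/-- `L ∈ ∂Φ(v)` for `Φ = ½ p² + I_K`. -/
def IsSubgradientHalfSqOn (K : PointedCone ℝ V) (p : Seminorm ℝ V) (v : V) (L : V →ₗ[ℝ] ℝ) :
    Prop :=
  ∀ w, w ∈ K → 1 / 2 * p v ^ 2 + L (w - v) ≤ 1 / 2 * p w ^ 2

variable {K : PointedCone ℝ V} {p : Seminorm ℝ V} {L : V →ₗ[ℝ] ℝ}

lemma zero_mem_slopeSet : (0 : ℝ) ∈ slopeSet K p L := ⟨0, K.zero_mem, by simp, by simp⟩

lemma mem_upperBounds_slopeSet_iff {M : ℝ} :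
    M ∈ upperBounds (slopeSet K p L) ↔ 0 ≤ M ∧ ∀ z ∈ K, L z ≤ M * p z := by
  constructor
  · intro hM
    have hM0 : 0 ≤ M := hM zero_mem_slopeSet
    refine ⟨hM0, fun z hz => ?_⟩
    have hscale : ∀ t, 0 ≤ t → p (t • z) ≤ 1 → t * L z ≤ M := fun t ht hp =>
      hM ⟨t • z, K.smul_mem ht hz, hp, by simp⟩
    rcases (apply_nonneg p z).eq_or_lt with hpz | hpz
    · rw [← hpz, mul_zero]
      by_contra! hLz
      have := hscale ((M + 1) / L z) (by positivity)
        (by rw [map_smul_eq_mul, ← hpz, mul_zero]; exact zero_le_one)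
      rw [div_mul_cancel₀ _ hLz.ne'] at this
      linarith
    · have := hscale (p z)⁻¹ (by positivity)
        (by rw [map_smul_eq_mul, Real.norm_of_nonneg (inv_nonneg.2 hpz.le),
          inv_mul_cancel₀ hpz.ne'])
      rwa [inv_mul_le_iff₀ hpz, mul_comm] at this
  · rintro ⟨hM, hbound⟩ _ ⟨z, hz, hpz, rfl⟩
    exact (hbound z hz).trans (mul_le_of_le_one_right hM hpz)

lemma apply_le_sSup_slopeSet_mul (hbdd : BddAbove (slopeSet K p L)) {z : V} (hz : z ∈ K) :
    L z ≤ sSup (slopeSet K p L) * p z :=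
  (mem_upperBounds_slopeSet_iff.1 (isLUB_csSup ⟨0, zero_mem_slopeSet⟩ hbdd).1).2 z hz

namespace IsSubgradientHalfSqOn

variable {v : V}

lemma apply_self_eq_sq (h : IsSubgradientHalfSqOn K p v L) (hv : v ∈ K) : L v = p v ^ 2 :=
  eq_of_forall_nonneg_sub_one_mul_le fun t ht => by
    have := h (t • v) (K.smul_mem ht hv)
    rw [map_sub, map_smul, map_smul_eq_mul, Real.norm_of_nonneg ht, smul_eq_mul] at this
    linear_combination this

lemma mem_upperBounds_slopeSet (h : IsSubgradientHalfSqOn K p v L) (hv : v ∈ K) :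
    p v ∈ upperBounds (slopeSet K p L) := by
  rintro _ ⟨z, hz, hpz, rfl⟩
  refine le_of_forall_pos_mul_le_half_sq_add_half_sq (apply_nonneg p v) fun t ht => ?_
  have := h (t • z) (K.smul_mem ht.le hz)
  rw [map_sub, map_smul, h.apply_self_eq_sq hv, map_smul_eq_mul, Real.norm_of_nonneg ht.le,
    smul_eq_mul] at this
  nlinarith [pow_le_one₀ (n := 2) (apply_nonneg p z) hpz, sq_nonneg t]

lemma sSup_slopeSet_eq (h : IsSubgradientHalfSqOn K p v L) (hv : v ∈ K) :
    sSup (slopeSet K p L) = p v := by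
  have hbdd : BddAbove (slopeSet K p L) := ⟨p v, h.mem_upperBounds_slopeSet hv⟩
  have hs : 0 ≤ sSup (slopeSet K p L) := le_csSup hbdd zero_mem_slopeSet
  have hLv : p v ^ 2 ≤ sSup (slopeSet K p L) * p v :=
    h.apply_self_eq_sq hv ▸ apply_le_sSup_slopeSet_mul hbdd hv
  refine le_antisymm (csSup_le ⟨0, zero_mem_slopeSet⟩ (h.mem_upperBounds_slopeSet hv)) ?_
  nlinarith [apply_nonneg p v]

end IsSubgradientHalfSqOn

lemma isSubgradientHalfSqOn_of_power_identity {v : V} (hbdd : BddAbove (slopeSet K p L))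
    (hv : 1 / 2 * p v ^ 2 + 1 / 2 * sSup (slopeSet K p L) ^ 2 = L v) :
    IsSubgradientHalfSqOn K p v L := by
  intro w hw
  rw [map_sub]
  nlinarith [apply_le_sSup_slopeSet_mul hbdd hw, sq_nonneg (sSup (slopeSet K p L) - p w)]

theorem isSubgradientHalfSqOn_iff {v : V} (hv : v ∈ K) :
    IsSubgradientHalfSqOn K p v L ↔ BddAbove (slopeSet K p L) ∧
      1 / 2 * p v ^ 2 + 1 / 2 * sSup (slopeSet K p L) ^ 2 = L v := by
  refine ⟨fun h => ⟨⟨p v, h.mem_upperBounds_slopeSet hv⟩, ?_⟩,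
    fun h => isSubgradientHalfSqOn_of_power_identity h.1 h.2⟩
  rw [h.sSup_slopeSet_eq hv, h.apply_self_eq_sq hv]
  ring

end

theorem inclusion_iff_power_identity_general
    {α : Type*} [MeasurableSpace α] (μ : Measure α)
    {V : Type*} [NormedAddCommGroup V] [NormedSpace ℝ V]
    (ι : V →L[ℝ] Lp ℝ 2 μ)
    (a : V →L[ℝ] V →L[ℝ] ℝ)
    (f : Lp ℝ 2 μ) (u v : V) (hv : 0 ≤ ι v) :
    (∀ w : V, 0 ≤ ι w →
        (1 / 2) * ‖ι v‖ ^ 2 + (-(a u (w - v)) + (inner ℝ f (ι (w - v)) : ℝ)) ≤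
          (1 / 2) * ‖ι w‖ ^ 2) ↔
      (BddAbove {r : ℝ | ∃ z : V, 0 ≤ ι z ∧ ‖ι z‖ ≤ 1 ∧
          r = -(a u z) + (inner ℝ f (ι z) : ℝ)} ∧
        (1 / 2) * ‖ι v‖ ^ 2 +
            (1 / 2) * (sSup {r : ℝ | ∃ z : V, 0 ≤ ι z ∧ ‖ι z‖ ≤ 1 ∧
              r = -(a u z) + (inner ℝ f (ι z) : ℝ)}) ^ 2 =
          -(a u v) + (inner ℝ f (ι v) : ℝ)) :=
  isSubgradientHalfSqOn_iff (K := (PointedCone.positive ℝ (Lp ℝ 2 μ)).comap ι.toLinearMap)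
    (p := (normSeminorm ℝ (Lp ℝ 2 μ)).comp ι.toLinearMap)
    (L := (-(a u) + (innerSL ℝ f).comp ι : V →L[ℝ] ℝ).toLinearMap) hv

/-- Characterization of the unilateral gradient flow by a differential inclusion: for
`F(u) = ½a(u,u) − ⟨f,u⟩` (at a fixed time), `u ∈ H¹₀` and `v = u̇ ∈ H¹₀` with `v ≥ 0`, the
following are equivalent:
(i) `Au + f ∈ ∂Φ(v)` where `Φ(w) = ½‖w‖²_{L²} + I_{{w ≥ 0}}` and
`(Au + f, z) = −a(u,z) + ⟨f, ι z⟩`, i.e. `Φ(w) ≥ Φ(v) + (Au+f, w−v)` for all `w ∈ H¹₀`;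
(ii) `½|v|²_{L²₊} + ½|∂F|²_{L²₊}(u) = −dF(u)[v]`, with the unilateral slope
`|∂F|_{L²₊}(u) = sup { −dF(u)[z] : z ∈ H¹₀, ι z ≥ 0, ‖ι z‖_{L²} ≤ 1 }` finite.
`H¹₀` is modelled by a normed space `V` embedded in `L²` by `ι`. -/
theorem inclusion_iff_power_identity
    {α : Type*} [MeasurableSpace α] (μ : Measure α)
    {V : Type*} [NormedAddCommGroup V] [NormedSpace ℝ V]
    (ι : V →L[ℝ] Lp ℝ 2 μ)
    (a : V →L[ℝ] V →L[ℝ] ℝ) (hsymm : ∀ u v : V, a u v = a v u)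
    (f : Lp ℝ 2 μ) (u v : V) (hv : 0 ≤ ι v) :
    (∀ w : V, 0 ≤ ι w →
        (1 / 2) * ‖ι v‖ ^ 2 + (-(a u (w - v)) + (inner ℝ f (ι (w - v)) : ℝ)) ≤
          (1 / 2) * ‖ι w‖ ^ 2) ↔
      (BddAbove {r : ℝ | ∃ z : V, 0 ≤ ι z ∧ ‖ι z‖ ≤ 1 ∧
          r = -(a u z) + (inner ℝ f (ι z) : ℝ)} ∧
        (1 / 2) * ‖ι v‖ ^ 2 +
            (1 / 2) * (sSup {r : ℝ | ∃ z : V, 0 ≤ ι z ∧ ‖ι z‖ ≤ 1 ∧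
              r = -(a u z) + (inner ℝ f (ι z) : ℝ)}) ^ 2 =
          -(a u v) + (inner ℝ f (ι v) : ℝ)) :=
  inclusion_iff_power_identity_general μ ι a f u v hv
end

section
/- Let F(t,u) = ½ a(u,u) − ⟨f(t),u⟩ be the energy with T-monotone subdifferential, and consider one step of the truncated implicit Euler scheme: ũ ∈ argmin{F(t', w) + (1/(2τ))‖w − u‖²_{L²} : w ∈ H¹₀} and ṽ ∈ argmin{F(t', w) + (1/(2τ))‖w − v‖²_{L²} : w ∈ H¹₀}. If u ≤ v a.e., then ũ ≤ ṽ a.e., and consequently max{ũ, u} ≤ max{ṽ, v} a.e. -/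
/-!
Each minimizer satisfies the Euler–Lagrange equation
`a(ũ, w) − ⟪g, w⟫ + τ⁻¹⟪ũ − u, w⟫ = 0` for all `w`. Subtracting the equations for `ũ` and `ṽ`
and testing with `p = (ũ − ṽ)⁺` gives
`a(ũ − ṽ, p) + τ⁻¹(‖p‖² + ⟪v − u, p⟫) = 0`. The first term is nonnegative by T-monotonicity and
the last by `u ≤ v`, so `‖p‖ = 0`, i.e. `ũ ≤ ṽ`.
-/

open MeasureTheory

section EulerStep

variable {V H : Type*} [NormedAddCommGroup V] [NormedSpace ℝ V]
  [NormedAddCommGroup H] [InnerProductSpace ℝ H]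
  (ι : V →L[ℝ] H) (a : V →L[ℝ] V →L[ℝ] ℝ) (g : H) (τ : ℝ) (u₀ : V)

noncomputable def eulerStepEnergy (w : V) : ℝ :=
  (1/2) * a w w - inner ℝ g (ι w) + (1/(2*τ)) * ‖ι w - ι u₀‖ ^ 2

variable {a}

lemma eulerStepEnergy_add_smul (hsymm : ∀ u v : V, a u v = a v u) (x w : V) (t : ℝ) :
    eulerStepEnergy ι a g τ u₀ (x + t • w) =
      eulerStepEnergy ι a g τ u₀ x
        + t * (a x w - inner ℝ g (ι w) + (1/τ) * inner ℝ (ι x - ι u₀) (ι w))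
        + t ^ 2 * ((1/2) * a w w + (1/(2*τ)) * ‖ι w‖ ^ 2) := by
  have hshift : ι (x + t • w) - ι u₀ = (ι x - ι u₀) + t • ι w := by
    rw [map_add, map_smul]; abel
  rw [eulerStepEnergy, eulerStepEnergy, hshift]
  simp only [norm_add_sq_real, norm_smul, real_inner_smul_right, map_add, map_smul,
    add_apply, smul_apply, smul_eq_mul,
    inner_add_right, hsymm w x, Real.norm_eq_abs, mul_pow, sq_abs]
  ring

lemma eulerStepEnergy_euler_lagrange (hsymm : ∀ u v : V, a u v = a v u) {x : V}
    (hmin : ∀ w, eulerStepEnergy ι a g τ u₀ x ≤ eulerStepEnergy ι a g τ u₀ w) (w : V) :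
    a x w - inner ℝ g (ι w) + (1/τ) * inner ℝ (ι x - ι u₀) (ι w) = 0 := by
  set L := a x w - inner ℝ g (ι w) + (1/τ) * inner ℝ (ι x - ι u₀) (ι w)
  set Q := (1/2) * a w w + (1/(2*τ)) * ‖ι w‖ ^ 2
  have hquad : ∀ t : ℝ, 0 ≤ Q * (t * t) + L * t + 0 := fun t => by
    have := hmin (x + t • w)
    rw [eulerStepEnergy_add_smul ι g τ u₀ hsymm] at this
    simp only [L, Q]
    linarith
  have hdisc := discrim_le_zero hquad
  rw [discrim] at hdisc
  nlinarith [sq_nonneg L]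

end EulerStep

namespace MeasureTheory.Lp

variable {α : Type*} [MeasurableSpace α] {μ : Measure α}

lemma inner_nonneg_of_nonneg {f g : Lp ℝ 2 μ} (hf : 0 ≤ f) (hg : 0 ≤ g) :
    0 ≤ inner ℝ f g := by
  rw [L2.inner_def]
  refine integral_nonneg_of_ae ?_
  filter_upwards [(coeFn_nonneg f).mpr hf, (coeFn_nonneg g).mpr hg] with x hfx hgx
  simpa using mul_nonneg hgx hfx

lemma inner_sup_zero_eq_norm_sq (f : Lp ℝ 2 μ) : inner ℝ f (f ⊔ 0) = ‖f ⊔ 0‖ ^ 2 := by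
  rw [← real_inner_self_eq_norm_sq, L2.inner_def, L2.inner_def]
  refine integral_congr_ae ?_
  filter_upwards [coeFn_sup f 0, coeFn_zero ℝ 2 μ] with x hsup hzero
  simp only [hsup, hzero, Pi.sup_apply, Pi.zero_apply, RCLike.inner_apply, conj_trivial]
  rcases le_total (f x) 0 with h | h <;> simp [h]

lemma nonpos_of_inner_sup_zero_nonpos {f : Lp ℝ 2 μ} (h : inner ℝ f (f ⊔ 0) ≤ 0) : f ≤ 0 := by
  rw [inner_sup_zero_eq_norm_sq] at h
  have hpos : f ⊔ 0 = 0 := norm_eq_zero.mp (by nlinarith [norm_nonneg (f ⊔ 0)])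
  exact sup_eq_right.mp hpos

end MeasureTheory.Lp

/-- `H¹₀` is modelled as a normed space `V` embedded in `L²` by `ι`, its lattice structure by a
positive-part map `P` with `ι (P w) = (ι w)⁺`, and T-monotonicity reads `a(w, P w) ≥ 0`. -/
theorem euler_step_comparison
    {α : Type*} [MeasurableSpace α] (μ : Measure α)
    {V : Type*} [NormedAddCommGroup V] [NormedSpace ℝ V]
    (ι : V →L[ℝ] Lp ℝ 2 μ)
    (a : V →L[ℝ] V →L[ℝ] ℝ) (hsymm : ∀ u v : V, a u v = a v u)
    (P : V → V) (hP : ∀ w : V, ι (P w) = (ι w) ⊔ 0)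
    (hTmon : ∀ w : V, 0 ≤ a w (P w))
    (τ : ℝ) (hτ : 0 < τ) (g : Lp ℝ 2 μ)
    (u v utld vtld : V)
    (hu : ∀ w : V,
      (1/2) * a utld utld - (inner ℝ g (ι utld) : ℝ) + (1/(2*τ)) * ‖ι utld - ι u‖ ^ 2 ≤
        (1/2) * a w w - (inner ℝ g (ι w) : ℝ) + (1/(2*τ)) * ‖ι w - ι u‖ ^ 2)
    (hv : ∀ w : V,
      (1/2) * a vtld vtld - (inner ℝ g (ι vtld) : ℝ) + (1/(2*τ)) * ‖ι vtld - ι v‖ ^ 2 ≤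
        (1/2) * a w w - (inner ℝ g (ι w) : ℝ) + (1/(2*τ)) * ‖ι w - ι v‖ ^ 2)
    (huv : ι u ≤ ι v) :
    ι utld ≤ ι vtld ∧ (ι utld ⊔ ι u) ≤ (ι vtld ⊔ ι v) := by
  set p := P (utld - vtld)
  have hp : ι p = (ι utld - ι vtld) ⊔ 0 := by rw [hP, map_sub]
  have hELu := eulerStepEnergy_euler_lagrange ι g τ u hsymm hu p
  have hELv := eulerStepEnergy_euler_lagrange ι g τ v hsymm hv p
  have hdata : 0 ≤ inner ℝ (ι v - ι u) (ι p) :=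
    Lp.inner_nonneg_of_nonneg (sub_nonneg.mpr huv) (hp ▸ le_sup_right)
  have hdiff : a (utld - vtld) p
      + (1/τ) * (inner ℝ (ι utld - ι vtld) (ι p) + inner ℝ (ι v - ι u) (ι p)) = 0 := by
    simp only [map_sub, sub_apply, inner_sub_left] at hELu hELv ⊢
    linear_combination hELu - hELv
  have hneg : inner ℝ (ι utld - ι vtld) (ι p) ≤ 0 := by
    have hτinv : 0 < 1/τ := one_div_pos.mpr hτ
    nlinarith [hTmon (utld - vtld)]
  have hle : ι utld ≤ ι vtld := sub_nonpos.mp (Lp.nonpos_of_inner_sup_zero_nonpos (hp ▸ hneg))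
  exact ⟨hle, sup_le_sup hle huv⟩
end

section
/- Let F(u) = ½∫_{(-1,1)} |u'|² + u dx (i.e. f = −1) on H¹₀(−1,1) and u₀ = 0. Then 0 ∈ ∂₊F(u₀) and 0 is the minimal selection ∂₊°F(u₀). Moreover, if u ∈ H¹₀(−1,1) satisfies u > 0 on (−1,1) and [u''−1]₊ ≢ 0, then ∂₊°F(u) = {−[u''−1]₊} and ⟨−[u''−1]₊ − 0, u − u₀⟩ < 0. Hence neither ∂₊°F nor ∂₊F is a monotone operator on L². -/
/-!
For `u ∈ C²` vanishing at the endpoints, integration by parts gives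
`F v - F u = ∫ (1 - u'') (v - u) + ½ ∫ |v' - u'|²`.
Testing `ξ ∈ ∂₊F(u)` with `v = u + t ψ`, `ψ ≥ 0`, and letting `t → 0` yields
`∫ ξ ψ ≤ ∫ (1 - u'') ψ`, hence `ξ ≤ 1 - u''` a.e. (mollify and use Lebesgue differentiation).
Conversely `min (1 - u'') 0 = -[u'' - 1]₊` lies in `∂₊F(u)` because `v - u ≥ 0`, and it is the
element of `(-∞, 1 - u'']` closest to `0` pointwise, so it is the minimal selection. It pairs
negatively with `u > 0` on the set where `u'' > 1`, while `0 ∈ ∂₊F(0)`.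
-/

open MeasureTheory Set Filter Topology
open scoped Interval ContDiff

lemma le_of_forall_pos_mul_le_mul_add_sq {x y c : ℝ}
    (h : ∀ t > 0, t * x ≤ t * y + t ^ 2 * c) : x ≤ y := by
  have hlim : Tendsto (fun t : ℝ => y + t * c) (𝓝[>] 0) (𝓝 y) :=
    ((continuous_const.add (continuous_id.mul continuous_const)).tendsto' 0 y
      (by simp)).mono_left nhdsWithin_le_nhds
  refine ge_of_tendsto hlim (eventually_nhdsWithin_of_forall fun t (ht : 0 < t) => ?_)
  refine le_of_mul_le_mul_left ?_ ht
  linarith [h t ht]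

lemma neg_max_sub_one_sq_le {c y : ℝ} (h : y ≤ 1 - c) : (-max (c - 1) 0) ^ 2 ≤ y ^ 2 := by
  rcases le_total c 1 with hc | hc
  · simp [max_eq_right (sub_nonpos.2 hc), sq_nonneg]
  · rw [max_eq_left (sub_nonneg.2 hc)]
    nlinarith

lemma eq_neg_max_sub_one_of_sq_eq {c y : ℝ} (h : y ≤ 1 - c)
    (heq : y ^ 2 = (-max (c - 1) 0) ^ 2) : y = -max (c - 1) 0 := by
  rcases le_total c 1 with hc | hc
  · rw [max_eq_right (sub_nonpos.2 hc)] at heq ⊢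
    simpa using heq
  · rw [max_eq_left (sub_nonneg.2 hc)] at heq ⊢
    nlinarith

lemma intervalIntegral_pos_of_nonneg_of_pos_at {f : ℝ → ℝ} {a b x₀ : ℝ} (hf : Continuous f)
    (hnn : ∀ x ∈ Ioo a b, 0 ≤ f x) (hx₀ : x₀ ∈ Ioo a b) (hpos : 0 < f x₀) :
    0 < ∫ x in a..b, f x := by
  have hab : a < b := hx₀.1.trans hx₀.2
  have hf0 : 0 ≤ᵐ[volume.restrict (Ι a b)] f := by
    rw [uIoc_of_le hab.le]
    exact ae_restrict_of_ae_eq_of_ae_restrict Ioo_ae_eq_Ioc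
      ((ae_restrict_iff' measurableSet_Ioo).2 (.of_forall hnn))
  rw [intervalIntegral.integral_pos_iff_support_of_nonneg_ae' hf0 (hf.intervalIntegrable a b)]
  refine ⟨hab, (IsOpen.measure_pos volume (hf.isOpen_support.inter isOpen_Ioo)
    ⟨x₀, hpos.ne', hx₀⟩).trans_le (measure_mono (inter_subset_inter_right _ Ioo_subset_Ioc_self))⟩

lemma exists_contDiff_pos_on_Ioo_integral_mul_neg {g : ℝ → ℝ} (hg : Continuous g) {a b x₀ : ℝ}
    (hx₀ : x₀ ∈ Ioo a b) (hgx₀ : g x₀ < 0) :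
    ∃ φ : ℝ → ℝ, ContDiff ℝ 1 φ ∧ φ a = 0 ∧ φ b = 0 ∧ (∀ x ∈ Ioo a b, 0 < φ x) ∧
      ∫ x in a..b, g x * φ x < 0 := by
  obtain ⟨δ, hδ, hball⟩ :=
    Metric.isOpen_iff.1 ((isOpen_lt hg continuous_const).inter isOpen_Ioo) x₀ ⟨hgx₀, hx₀⟩
  let f : ContDiffBump x₀ := ⟨δ / 2, δ, by positivity, by linarith⟩
  have hgf : ∀ x, 0 ≤ -g x * f x := fun x => by
    by_cases hx : x ∈ Metric.ball x₀ δ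
    · exact mul_nonneg (neg_nonneg.2 (hball hx).1.le) (f.nonneg' x)
    · rw [f.zero_of_le_dist (not_lt.1 hx), mul_zero]
  have hfout : ∀ x ∉ Ioo a b, f x = 0 := fun x hx =>
    f.zero_of_le_dist (not_lt.1 fun h => hx (hball h).2)
  have hA : ∫ x in a..b, g x * f x < 0 := by
    have := intervalIntegral_pos_of_nonneg_of_pos_at (f := fun x => -g x * f x)
      (hg.neg.mul f.continuous)
      (fun x _ => hgf x) hx₀ (by simpa [f.one_of_mem_closedBall (Metric.mem_closedBall_self
        f.rIn_pos.le)] using hgx₀)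
    simp only [neg_mul, intervalIntegral.integral_neg] at this
    linarith
  let q : ℝ → ℝ := fun x => (x - a) * (b - x)
  have hlim : Tendsto (fun ε => (∫ x in a..b, g x * f x) + ε * ∫ x in a..b, g x * q x)
      (𝓝[>] 0) (𝓝 (∫ x in a..b, g x * f x)) :=
    ((continuous_const.add (continuous_id.mul continuous_const)).tendsto' 0 _
      (by simp)).mono_left nhdsWithin_le_nhds
  obtain ⟨ε, hεneg, hε⟩ :=
    ((hlim.eventually (gt_mem_nhds hA)).and self_mem_nhdsWithin).exists
  refine ⟨fun x => f x + ε * q x, f.contDiff.add (contDiff_const.mul (by fun_prop)),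
    by simp [q, hfout a fun h => h.1.false], by simp [q, hfout b fun h => h.2.false],
    fun x hx => ?_, ?_⟩
  · have : 0 < q x := mul_pos (sub_pos.2 hx.1) (sub_pos.2 hx.2)
    have : 0 < ε := hε
    exact add_pos_of_nonneg_of_pos (f.nonneg' x) (by positivity)
  · have hfi : IntervalIntegrable (fun x => g x * f x) volume a b :=
      (hg.mul f.continuous).intervalIntegrable a b
    have hqi : IntervalIntegrable (fun x => ε * (g x * q x)) volume a b :=
      (continuous_const.mul (hg.mul (by fun_prop))).intervalIntegrable a b
    calc ∫ x in a..b, g x * (f x + ε * q x)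
        = ∫ x in a..b, (g x * f x + ε * (g x * q x)) := by congr 1; ext x; ring
      _ = _ := by rw [intervalIntegral.integral_add hfi hqi, intervalIntegral.integral_const_mul]
      _ < 0 := hεneg

lemma ContDiff.continuous_deriv_deriv {f : ℝ → ℝ} (hf : ContDiff ℝ 2 f) :
    Continuous (deriv (deriv f)) :=
  (hf.iterate_deriv' 1 1).continuous_deriv le_rfl

lemma ContDiff.continuous_neg_max_deriv_deriv_sub_one {u : ℝ → ℝ} (hu : ContDiff ℝ 2 u) :
    Continuous fun x => -max (deriv (deriv u) x - 1) 0 :=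
  ((hu.continuous_deriv_deriv.sub continuous_const).max continuous_const).neg

theorem IsOpen.ae_nonpos_of_integral_contDiff_mul_nonpos {E : Type*} [NormedAddCommGroup E]
    [NormedSpace ℝ E] [FiniteDimensional ℝ E] [MeasurableSpace E] [BorelSpace E]
    {μ : Measure E} [μ.IsAddHaarMeasure] {U : Set E} (hU : IsOpen U) {h : E → ℝ}
    (hh : IntegrableOn h U μ)
    (H : ∀ g : E → ℝ, ContDiff ℝ ∞ g → (∀ x, 0 ≤ g x) → Function.support g ⊆ U →
      ∫ x in U, g x * h x ∂μ ≤ 0) :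
    ∀ᵐ x ∂μ.restrict U, h x ≤ 0 := by
  let φ : ℕ → ContDiffBump (0 : E) := fun n =>
    ⟨1 / (n + 2), 1 / (n + 1), by positivity, by gcongr; linarith⟩
  have hφ : Tendsto (fun n => (φ n).rOut) atTop (𝓝 0) := tendsto_one_div_add_atTop_nhds_zero_nat
  have hφK : ∀ᶠ n in atTop, (φ n).rOut ≤ 2 * (φ n).rIn := .of_forall fun n => by
    change 1 / ((n : ℝ) + 1) ≤ 2 * (1 / (n + 2))
    rw [div_le_iff₀ (by positivity)]
    field_simp
    linarith
  have hconv := ContDiffBump.ae_convolution_tendsto_right_of_locallyIntegrable (μ := μ) hφ hφK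
    (hh.integrable_indicator hU.measurableSet).locallyIntegrable
  rw [ae_restrict_iff' hU.measurableSet]
  filter_upwards [hconv] with x hx hxU
  rw [← indicator_of_mem hxU h]
  refine le_of_tendsto hx ?_
  obtain ⟨ε, hε, hball⟩ := Metric.isOpen_iff.1 hU x hxU
  filter_upwards [hφ.eventually (gt_mem_nhds hε)] with n hn
  -- `(φₙ ⋆ h) x` is the integral of `h` against the reflected bump centred at `x`
  rw [convolution_eq_swap]
  simp only [ContinuousLinearMap.lsmul_apply, smul_eq_mul]
  simp_rw [← indicator_mul_right (s := U) (fun t => (φ n).normed μ (x - t)) h]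
  rw [integral_indicator hU.measurableSet]
  refine H _ ((φ n).contDiff_normed.comp (contDiff_const.sub contDiff_id))
    (fun t => (φ n).nonneg_normed _) fun t ht => hball ?_
  have : x - t ∈ Metric.ball (0 : E) (φ n).rOut := (φ n).support_normed_eq (μ := μ) ▸ ht
  rw [Metric.mem_ball, dist_zero_right, ← dist_eq_norm'] at this
  exact this.trans hn

noncomputable def energy (a b : ℝ) (w : ℝ → ℝ) : ℝ :=
  (1/2) * (∫ x in a..b, (deriv w x) ^ 2) + ∫ x in a..b, w x

def IsAdmissible (a b : ℝ) (w : ℝ → ℝ) : Prop :=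
  Differentiable ℝ w ∧ w a = 0 ∧ w b = 0 ∧
    IntervalIntegrable (fun x => (deriv w x) ^ 2) volume a b ∧ IntervalIntegrable w volume a b

def unilateralSubdiff (a b : ℝ) (w : ℝ → ℝ) : Set (ℝ → ℝ) :=
  {ξ | IntervalIntegrable (fun x => (ξ x) ^ 2) volume a b ∧
    ∀ v : ℝ → ℝ, IsAdmissible a b v → (∀ x ∈ Icc a b, w x ≤ v x) →
      energy a b w + (∫ x in a..b, ξ x * (v x - w x)) ≤ energy a b v}

section Interval

variable {a b : ℝ}

lemma IsAdmissible.intervalIntegrable_deriv {v : ℝ → ℝ} (hv : IsAdmissible a b v) :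
    IntervalIntegrable (deriv v) volume a b := by
  have : IsFiniteMeasure (volume.restrict (Ι a b)) := by rw [uIoc]; infer_instance
  exact intervalIntegrable_iff.2 (((memLp_two_iff_integrable_sq
    (measurable_deriv v).aestronglyMeasurable).2 (intervalIntegrable_iff.1 hv.2.2.2.1)).integrable
      one_le_two)

lemma isAdmissible_of_contDiff {w : ℝ → ℝ} (hw : ContDiff ℝ 1 w) (hwa : w a = 0) (hwb : w b = 0) :
    IsAdmissible a b w :=
  ⟨hw.differentiable one_ne_zero, hwa, hwb,
    ((hw.continuous_deriv le_rfl).pow 2).intervalIntegrable a b,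
    hw.continuous.intervalIntegrable a b⟩

lemma energy_sub_energy {u v : ℝ → ℝ} (hu : ContDiff ℝ 2 u) (hua : u a = 0) (hub : u b = 0)
    (hv : IsAdmissible a b v) :
    energy a b v - energy a b u = (∫ x in a..b, (1 - deriv (deriv u) x) * (v x - u x)) +
      1/2 * ∫ x in a..b, (deriv v x - deriv u x) ^ 2 := by
  have hv' := hv.intervalIntegrable_deriv
  obtain ⟨hvd, hva, hvb, hv'2, hvi⟩ := hv
  have hu1 : ContDiff ℝ 1 (deriv u) := hu.iterate_deriv' 1 1
  have hu' : Continuous (deriv u) := hu1.continuous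
  have hu'' := hu.continuous_deriv_deriv
  have hui : IntervalIntegrable u volume a b := hu.continuous.intervalIntegrable a b
  have hw' : IntervalIntegrable (fun x => deriv v x - deriv u x) volume a b :=
    hv'.sub (hu'.intervalIntegrable a b)
  have hu'2 : IntervalIntegrable (fun x => deriv u x ^ 2) volume a b :=
    (hu'.pow 2).intervalIntegrable a b
  have hu'w' : IntervalIntegrable (fun x => deriv u x * (deriv v x - deriv u x)) volume a b :=
    hw'.continuousOn_mul hu'.continuousOn
  have hu''w : IntervalIntegrable (fun x => deriv (deriv u) x * (v x - u x)) volume a b :=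
    (hu''.mul (hvd.continuous.sub hu.continuous)).intervalIntegrable a b
  have hibp : ∫ x in a..b, deriv u x * (deriv v x - deriv u x) =
      -∫ x in a..b, deriv (deriv u) x * (v x - u x) := by
    rw [intervalIntegral.integral_mul_deriv_eq_deriv_mul (v := fun x => v x - u x)
      (fun x _ => (hu1.differentiable one_ne_zero x).hasDerivAt)
      (fun x _ => (hvd x).hasDerivAt.sub (hu.differentiable two_ne_zero x).hasDerivAt)
      (hu''.intervalIntegrable a b) hw']
    simp [hva, hvb, hua, hub]
  have hsq : ∫ x in a..b, (deriv v x - deriv u x) ^ 2 = (∫ x in a..b, deriv v x ^ 2) -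
      (∫ x in a..b, deriv u x ^ 2) - 2 * ∫ x in a..b, deriv u x * (deriv v x - deriv u x) := by
    calc ∫ x in a..b, (deriv v x - deriv u x) ^ 2
        = ∫ x in a..b, (deriv v x ^ 2 - deriv u x ^ 2
            - 2 * (deriv u x * (deriv v x - deriv u x))) :=
          intervalIntegral.integral_congr fun x _ => by ring
      _ = _ := by
        rw [intervalIntegral.integral_sub (hv'2.sub hu'2) (hu'w'.const_mul 2),
          intervalIntegral.integral_sub hv'2 hu'2, intervalIntegral.integral_const_mul]
  have hlin : ∫ x in a..b, (1 - deriv (deriv u) x) * (v x - u x) = (∫ x in a..b, v x) -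
      (∫ x in a..b, u x) - ∫ x in a..b, deriv (deriv u) x * (v x - u x) := by
    calc ∫ x in a..b, (1 - deriv (deriv u) x) * (v x - u x)
        = ∫ x in a..b, ((v x - u x) - deriv (deriv u) x * (v x - u x)) :=
          intervalIntegral.integral_congr fun x _ => by ring
      _ = _ := by
        rw [intervalIntegral.integral_sub (hvi.sub hui) hu''w,
          intervalIntegral.integral_sub hvi hui]
  simp only [energy]
  linarith

lemma integral_mul_le_of_mem_unilateralSubdiff {u ξ ψ : ℝ → ℝ} (hu : ContDiff ℝ 2 u)
    (hua : u a = 0) (hub : u b = 0) (hξ : ξ ∈ unilateralSubdiff a b u) (hψ : ContDiff ℝ 1 ψ)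
    (hψa : ψ a = 0) (hψb : ψ b = 0) (hψ0 : ∀ x ∈ Ioo a b, 0 ≤ ψ x) :
    ∫ x in a..b, ξ x * ψ x ≤ ∫ x in a..b, (1 - deriv (deriv u) x) * ψ x := by
  refine le_of_forall_pos_mul_le_mul_add_sq (c := 1/2 * ∫ x in a..b, deriv ψ x ^ 2) fun t ht => ?_
  have hv : IsAdmissible a b (fun x => u x + t * ψ x) :=
    isAdmissible_of_contDiff ((hu.of_le one_le_two).add (contDiff_const.mul hψ))
      (by simp [hua, hψa]) (by simp [hub, hψb])
  have hle : ∀ x ∈ Icc a b, u x ≤ u x + t * ψ x := fun x hx => by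
    rcases eq_endpoints_or_mem_Ioo_of_mem_Icc hx with rfl | rfl | hx
    · simp [hψa]
    · simp [hψb]
    · nlinarith [hψ0 x hx]
  have hsub := hξ.2 _ hv hle
  have hid := energy_sub_energy hu hua hub hv
  have hderiv : ∀ x, deriv (fun x => u x + t * ψ x) x - deriv u x = t * deriv ψ x := fun x => by
    have : HasDerivAt (fun x => u x + t * ψ x) (deriv u x + t * deriv ψ x) x :=
      (hu.differentiable two_ne_zero x).hasDerivAt.add
        ((hψ.differentiable one_ne_zero x).hasDerivAt.const_mul t)
    rw [this.deriv, add_sub_cancel_left]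
  simp only [hderiv, add_sub_cancel_left, mul_pow, mul_left_comm _ t,
    intervalIntegral.integral_const_mul] at hsub hid
  linarith

lemma zero_mem_unilateralSubdiff_zero (hab : a ≤ b) :
    (fun _ => (0 : ℝ)) ∈ unilateralSubdiff a b (fun _ => 0) := by
  refine ⟨by simp, fun v _ hv => ?_⟩
  have h1 := intervalIntegral.integral_nonneg (μ := volume) hab fun x _ => sq_nonneg (deriv v x)
  have h2 := intervalIntegral.integral_nonneg (μ := volume) hab hv
  have h0 : energy a b (fun _ => 0) = 0 := by simp [energy]
  rw [h0]
  simp only [zero_mul, intervalIntegral.integral_zero, add_zero]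
  unfold energy
  linarith

lemma neg_max_mem_unilateralSubdiff {u : ℝ → ℝ} (hab : a ≤ b) (hu : ContDiff ℝ 2 u)
    (hua : u a = 0) (hub : u b = 0) :
    (fun x => -max (deriv (deriv u) x - 1) 0) ∈ unilateralSubdiff a b u := by
  have hξc := hu.continuous_neg_max_deriv_deriv_sub_one
  refine ⟨(hξc.pow 2).intervalIntegrable a b, fun v hv hvu => ?_⟩
  have hid := energy_sub_energy hu hua hub hv
  have hcont : Continuous fun x => v x - u x := hv.1.continuous.sub hu.continuous
  have hlin : ∫ x in a..b, -max (deriv (deriv u) x - 1) 0 * (v x - u x) ≤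
      ∫ x in a..b, (1 - deriv (deriv u) x) * (v x - u x) :=
    intervalIntegral.integral_mono_on hab
      ((hξc.mul hcont).intervalIntegrable a b)
      (((continuous_const.sub hu.continuous_deriv_deriv).mul hcont).intervalIntegrable a b)
      fun x hx => by
        nlinarith [le_max_left (deriv (deriv u) x - 1) 0, sub_nonneg.2 (hvu x hx)]
  have hsq := intervalIntegral.integral_nonneg (μ := volume) hab fun x _ =>
    sq_nonneg (deriv v x - deriv u x)
  linarith

-- Elements of `unilateralSubdiff` are not assumed measurable, so `∫ ξ φ` might be a junk `0`;
-- a test function with `∫ (1 - u'') φ < 0` rules this out.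
lemma integrableOn_of_mem_unilateralSubdiff {u ξ : ℝ → ℝ} {x₀ : ℝ} (hu : ContDiff ℝ 2 u)
    (hua : u a = 0) (hub : u b = 0) (hx₀ : x₀ ∈ Ioo a b) (hux₀ : 1 < deriv (deriv u) x₀)
    (hξ : ξ ∈ unilateralSubdiff a b u) :
    IntegrableOn ξ (Ioo a b) := by
  have hab : a ≤ b := (hx₀.1.trans hx₀.2).le
  obtain ⟨φ, hφ, hφa, hφb, hφpos, hφneg⟩ := exists_contDiff_pos_on_Ioo_integral_mul_neg
    (g := fun x => 1 - deriv (deriv u) x) (continuous_const.sub hu.continuous_deriv_deriv) hx₀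
    (sub_neg.2 hux₀)
  have hξφ : IntervalIntegrable (fun x => ξ x * φ x) volume a b := by
    by_contra h
    have := integral_mul_le_of_mem_unilateralSubdiff hu hua hub hξ hφ hφa hφb
      fun x hx => (hφpos x hx).le
    rw [intervalIntegral.integral_undef h] at this
    linarith
  have hmeas : AEStronglyMeasurable ξ (volume.restrict (Ioo a b)) := by
    refine (((intervalIntegrable_iff_integrableOn_Ioo_of_le hab).1 hξφ).aestronglyMeasurable.mul
      hφ.continuous.measurable.inv.aestronglyMeasurable).congr ?_
    refine (ae_restrict_iff' measurableSet_Ioo).2 (.of_forall fun x hx => ?_)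
    rw [Pi.mul_apply, Pi.inv_apply, mul_inv_cancel_right₀ (hφpos x hx).ne']
  exact ((memLp_two_iff_integrable_sq hmeas).2
    ((intervalIntegrable_iff_integrableOn_Ioo_of_le hab).1 hξ.1)).integrable one_le_two

lemma ae_le_of_mem_unilateralSubdiff {u ξ : ℝ → ℝ} {x₀ : ℝ} (hu : ContDiff ℝ 2 u)
    (hua : u a = 0) (hub : u b = 0) (hx₀ : x₀ ∈ Ioo a b) (hux₀ : 1 < deriv (deriv u) x₀)
    (hξ : ξ ∈ unilateralSubdiff a b u) :
    ∀ᵐ x ∂volume.restrict (Ioo a b), ξ x ≤ 1 - deriv (deriv u) x := by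
  have hab : a ≤ b := (hx₀.1.trans hx₀.2).le
  have hg : Continuous fun x => 1 - deriv (deriv u) x :=
    continuous_const.sub hu.continuous_deriv_deriv
  have hξi := integrableOn_of_mem_unilateralSubdiff hu hua hub hx₀ hux₀ hξ
  have key := isOpen_Ioo.ae_nonpos_of_integral_contDiff_mul_nonpos
    (h := fun x => ξ x - (1 - deriv (deriv u) x))
    (hξi.sub (hg.integrableOn_Icc.mono_set Ioo_subset_Icc_self)) fun ψ hψ hψ0 hψU => ?_
  · filter_upwards [key] with x (hx : ξ x - (1 - deriv (deriv u) x) ≤ 0)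
    linarith
  have hψa : ψ a = 0 := Function.notMem_support.1 fun h => (hψU h).1.false
  have hψb : ψ b = 0 := Function.notMem_support.1 fun h => (hψU h).2.false
  have hle := integral_mul_le_of_mem_unilateralSubdiff hu hua hub hξ
    (hψ.of_le (by exact_mod_cast le_top)) hψa hψb fun x _ => hψ0 x
  have hξψ : IntervalIntegrable (fun x => ξ x * ψ x) volume a b :=
    ((intervalIntegrable_iff_integrableOn_Ioo_of_le hab).2 hξi).mul_continuousOn
      hψ.continuous.continuousOn
  have hgψ : IntervalIntegrable (fun x => (1 - deriv (deriv u) x) * ψ x) volume a b :=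
    (hg.mul hψ.continuous).intervalIntegrable a b
  rw [← integral_Ioc_eq_integral_Ioo, ← intervalIntegral.integral_of_le hab]
  calc ∫ x in a..b, ψ x * (ξ x - (1 - deriv (deriv u) x))
      = (∫ x in a..b, ξ x * ψ x) - ∫ x in a..b, (1 - deriv (deriv u) x) * ψ x := by
        rw [← intervalIntegral.integral_sub hξψ hgψ]
        exact intervalIntegral.integral_congr fun x _ => by ring
    _ ≤ 0 := sub_nonpos.2 hle

lemma integral_sq_neg_max_le_of_mem_unilateralSubdiff {u ξ : ℝ → ℝ} {x₀ : ℝ}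
    (hu : ContDiff ℝ 2 u) (hua : u a = 0) (hub : u b = 0) (hx₀ : x₀ ∈ Ioo a b)
    (hux₀ : 1 < deriv (deriv u) x₀) (hξ : ξ ∈ unilateralSubdiff a b u) :
    ∫ x in a..b, (-max (deriv (deriv u) x - 1) 0) ^ 2 ≤ ∫ x in a..b, ξ x ^ 2 := by
  have hab : a ≤ b := (hx₀.1.trans hx₀.2).le
  have hc : Continuous fun x => (-max (deriv (deriv u) x - 1) 0) ^ 2 :=
    hu.continuous_neg_max_deriv_deriv_sub_one.pow 2
  simp only [intervalIntegral.integral_of_le hab, integral_Ioc_eq_integral_Ioo]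
  refine integral_mono_ae (hc.integrableOn_Icc.mono_set Ioo_subset_Icc_self)
    ((intervalIntegrable_iff_integrableOn_Ioo_of_le hab).1 hξ.1) ?_
  filter_upwards [ae_le_of_mem_unilateralSubdiff hu hua hub hx₀ hux₀ hξ] with x hx
  exact neg_max_sub_one_sq_le hx

lemma ae_eq_neg_max_of_integral_sq_le {u ξ : ℝ → ℝ} {x₀ : ℝ}
    (hu : ContDiff ℝ 2 u) (hua : u a = 0) (hub : u b = 0) (hx₀ : x₀ ∈ Ioo a b)
    (hux₀ : 1 < deriv (deriv u) x₀) (hξ : ξ ∈ unilateralSubdiff a b u)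
    (hle : ∫ x in a..b, ξ x ^ 2 ≤ ∫ x in a..b, (-max (deriv (deriv u) x - 1) 0) ^ 2) :
    ∀ᵐ x ∂volume.restrict (Ioo a b), ξ x = -max (deriv (deriv u) x - 1) 0 := by
  have hab : a ≤ b := (hx₀.1.trans hx₀.2).le
  have hξle := ae_le_of_mem_unilateralSubdiff hu hua hub hx₀ hux₀ hξ
  have heq := le_antisymm (integral_sq_neg_max_le_of_mem_unilateralSubdiff hu hua hub hx₀
    hux₀ hξ) hle
  have hc : Continuous fun x => (-max (deriv (deriv u) x - 1) 0) ^ 2 :=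
    hu.continuous_neg_max_deriv_deriv_sub_one.pow 2
  simp only [intervalIntegral.integral_of_le hab, integral_Ioc_eq_integral_Ioo] at heq
  rw [integral_eq_iff_of_ae_le (hc.integrableOn_Icc.mono_set Ioo_subset_Icc_self)
    ((intervalIntegrable_iff_integrableOn_Ioo_of_le hab).1 hξ.1)
    (by filter_upwards [hξle] with x hx using neg_max_sub_one_sq_le hx)] at heq
  filter_upwards [hξle, heq] with x hx hsq
  exact eq_neg_max_sub_one_of_sq_eq hx hsq.symm

lemma integral_neg_max_mul_neg {u : ℝ → ℝ} {x₀ : ℝ} (hu : ContDiff ℝ 2 u)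
    (hupos : ∀ x ∈ Ioo a b, 0 < u x) (hx₀ : x₀ ∈ Ioo a b) (hux₀ : 1 < deriv (deriv u) x₀) :
    ∫ x in a..b, -max (deriv (deriv u) x - 1) 0 * u x < 0 := by
  have := intervalIntegral_pos_of_nonneg_of_pos_at
    (f := fun x => max (deriv (deriv u) x - 1) 0 * u x)
    (((hu.continuous_deriv_deriv.sub continuous_const).max continuous_const).mul hu.continuous)
    (fun x hx => mul_nonneg (le_max_right _ _) (hupos x hx).le) hx₀
    (mul_pos (lt_max_of_lt_left (sub_pos.2 hux₀)) (hupos x₀ hx₀))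
  simp only [neg_mul, intervalIntegral.integral_neg]
  linarith

end Interval

/-- Non-monotonicity of the unilateral subdifferential: for
`F(w) = ½∫_{(−1,1)} |w'|² + w dx` (i.e. `f = −1`) on `H¹₀(−1,1)`, with
`∂₊F(w) = { ξ ∈ L² : F(v) ≥ F(w) + ⟨ξ, v − w⟩ for all admissible v ≥ w }`:
`0 ∈ ∂₊F(0)` and `0` is the minimal selection `∂₊°F(0)`; if `u ∈ H¹₀(−1,1)` is `C²` with
`u > 0` on `(−1,1)` and `[u'' − 1]₊ ≢ 0`, then `ξmin = −[u''−1]₊` belongs to `∂₊F(u)`, has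
minimal `L²`-norm there, is the unique minimizer (a.e.), and satisfies
`⟨ξmin − 0, u − 0⟩ < 0`.  Hence neither `∂₊°F` nor `∂₊F` is monotone on `L²`. -/
theorem unilateral_subdifferential_not_monotone
    (u : ℝ → ℝ) (hu2 : ContDiff ℝ 2 u) (hub1 : u (-1) = 0) (hub2 : u 1 = 0)
    (hupos : ∀ x ∈ Set.Ioo (-1:ℝ) 1, 0 < u x)
    (hnz : ¬ (∀ᵐ x ∂(volume.restrict (Set.Ioo (-1:ℝ) 1)),
      max (deriv (deriv u) x - 1) 0 = 0)) :
    let F : (ℝ → ℝ) → ℝ := fun w =>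
      (1/2) * (∫ x in (-1:ℝ)..1, (deriv w x) ^ 2) + ∫ x in (-1:ℝ)..1, w x
    let Adm : (ℝ → ℝ) → Prop := fun w => Differentiable ℝ w ∧ w (-1) = 0 ∧ w 1 = 0 ∧
      IntervalIntegrable (fun x => (deriv w x) ^ 2) volume (-1) 1 ∧
      IntervalIntegrable w volume (-1) 1
    let sub : (ℝ → ℝ) → Set (ℝ → ℝ) := fun w =>
      {ξ | IntervalIntegrable (fun x => (ξ x) ^ 2) volume (-1) 1 ∧
        ∀ v : ℝ → ℝ, Adm v → (∀ x ∈ Set.Icc (-1:ℝ) 1, w x ≤ v x) →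
          F w + (∫ x in (-1:ℝ)..1, ξ x * (v x - w x)) ≤ F v}
    let ξmin : ℝ → ℝ := fun x => -(max (deriv (deriv u) x - 1) 0)
    ((fun _ => (0:ℝ)) ∈ sub (fun _ => (0:ℝ))) ∧
    (∀ ξ ∈ sub (fun _ => (0:ℝ)),
      (∫ x in (-1:ℝ)..1, ((0:ℝ)) ^ 2) ≤ ∫ x in (-1:ℝ)..1, (ξ x) ^ 2) ∧
    (ξmin ∈ sub u) ∧
    (∀ ξ ∈ sub u, (∫ x in (-1:ℝ)..1, (ξmin x) ^ 2) ≤ ∫ x in (-1:ℝ)..1, (ξ x) ^ 2) ∧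
    (∀ ξ ∈ sub u,
      (∀ η ∈ sub u, (∫ x in (-1:ℝ)..1, (ξ x) ^ 2) ≤ ∫ x in (-1:ℝ)..1, (η x) ^ 2) →
      (∀ᵐ x ∂(volume.restrict (Set.Ioo (-1:ℝ) 1)), ξ x = ξmin x)) ∧
    ((∫ x in (-1:ℝ)..1, (ξmin x - 0) * (u x - 0)) < 0) ∧
    (∃ (u₁ u₂ ξ₁ ξ₂ : ℝ → ℝ), ξ₁ ∈ sub u₁ ∧ ξ₂ ∈ sub u₂ ∧
      (∫ x in (-1:ℝ)..1, (ξ₁ x - ξ₂ x) * (u₁ x - u₂ x)) < 0) := by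
  intro F Adm sub ξmin
  obtain ⟨x₀, hx₀, hux₀⟩ : ∃ x₀ ∈ Ioo (-1 : ℝ) 1, 1 < deriv (deriv u) x₀ := by
    by_contra! h
    exact hnz ((ae_restrict_iff' measurableSet_Ioo).2 (.of_forall fun x hx =>
      max_eq_right (sub_nonpos.2 (h x hx))))
  have h0 : (fun _ => (0 : ℝ)) ∈ sub (fun _ => 0) := zero_mem_unilateralSubdiff_zero (by norm_num)
  have hmin : ξmin ∈ sub u := neg_max_mem_unilateralSubdiff (by norm_num) hu2 hub1 hub2
  have hneg : ∫ x in (-1 : ℝ)..1, (ξmin x - 0) * (u x - 0) < 0 := by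
    simpa only [sub_zero] using integral_neg_max_mul_neg hu2 hupos hx₀ hux₀
  refine ⟨h0, fun ξ _ => ?_, hmin,
    fun ξ hξ => integral_sq_neg_max_le_of_mem_unilateralSubdiff hu2 hub1 hub2 hx₀ hux₀ hξ,
    fun ξ hξ hle => ae_eq_neg_max_of_integral_sq_le hu2 hub1 hub2 hx₀ hux₀ hξ (hle ξmin hmin),
    hneg, fun _ => 0, u, fun _ => 0, ξmin, h0, hmin, ?_⟩
  · simpa using intervalIntegral.integral_nonneg (μ := volume) (by norm_num : (-1 : ℝ) ≤ 1)
      fun x _ => sq_nonneg (ξ x)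
  · exact (intervalIntegral.integral_congr fun x _ => by ring).trans_lt hneg
end
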